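/- For A ∈ B(H), w(A) ≥ (1/2)‖A‖ + (1/2)| ‖Re(A)‖ − ‖Im(A)‖ |. -/

import Mathlib

open ContinuousLinearMap in
noncomputable def numRad {E : Type*} [NormedAddCommGroup E] [InnerProductSpace ℂ E]
    (T : E →L[ℂ] E) : ℝ :=
  ⨆ x : {x : E // ‖x‖ = 1}, ‖(inner ℂ (T x) (x : E) : ℂ)‖

variable {H : Type*} [NormedAddCommGroup H] [InnerProductSpace ℂ H] [CompleteSpace H]

/-- `|A| = (A*A)^{1/2}`, the positive square root of `A*A`. -/
noncomputable def absOp (A : H →L[ℂ] H) : H →L[ℂ] H :=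
  CFC.sqrt (ContinuousLinearMap.adjoint A * A)

/-- real part of an operator -/
noncomputable def reOp (A : H →L[ℂ] H) : H →L[ℂ] H :=
  (1 / 2 : ℂ) • (A + ContinuousLinearMap.adjoint A)

/-- imaginary part of an operator -/
noncomputable def imOp (A : H →L[ℂ] H) : H →L[ℂ] H :=
  (1 / (2 * Complex.I) : ℂ) • (A - ContinuousLinearMap.adjoint A)

/-- the block diagonal operator `diag(A,B)` on `H ⊕ H` (ℓ²-sum). -/
noncomputable def blockDiag (A B : H →L[ℂ] H) :
    WithLp 2 (H × H) →L[ℂ] WithLp 2 (H × H) :=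
  ((WithLp.prodContinuousLinearEquiv 2 ℂ H H).symm.toContinuousLinearMap).comp
    ((A.prodMap B).comp (WithLp.prodContinuousLinearEquiv 2 ℂ H H).toContinuousLinearMap)

/-- the off-diagonal block operator `[[O,A],[B,O]] : (x,y) ↦ (A y, B x)` on `H ⊕ H`. -/
noncomputable def blockOffDiag (A B : H →L[ℂ] H) :
    WithLp 2 (H × H) →L[ℂ] WithLp 2 (H × H) :=
  ((WithLp.prodContinuousLinearEquiv 2 ℂ H H).symm.toContinuousLinearMap).comp
    (((A.prodMap B).comp (ContinuousLinearEquiv.prodComm ℂ H H).toContinuousLinearMap).comp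
      (WithLp.prodContinuousLinearEquiv 2 ℂ H H).toContinuousLinearMap)

/-!
The real and imaginary parts of `A` are self-adjoint, so their norms are the suprema of
`|⟪Re(A) x, x⟫| = |Re ⟪A x, x⟫|` and `|⟪Im(A) x, x⟫| = |Im ⟪A x, x⟫|` over unit vectors `x`;
hence both are at most `w(A)`. Since `A = Re(A) + i Im(A)` gives `‖A‖ ≤ ‖Re(A)‖ + ‖Im(A)‖`,
the right-hand side is at most `(‖Re(A)‖ + ‖Im(A)‖) / 2 + |‖Re(A)‖ - ‖Im(A)‖| / 2`, which is
`max ‖Re(A)‖ ‖Im(A)‖ ≤ w(A)`.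
-/

open ContinuousLinearMap ComplexStarModule RCLike
open scoped InnerProductSpace

theorem ContinuousLinearMap.norm_le_of_abs_re_inner_self_le {𝕜 E : Type*} [RCLike 𝕜]
    [NormedAddCommGroup E] [InnerProductSpace 𝕜 E] {T : E →L[𝕜] E}
    (hT : (T : E →ₗ[𝕜] E).IsSymmetric) {M : ℝ} (hM : 0 ≤ M)
    (h : ∀ x, |re ⟪T x, x⟫_𝕜| ≤ M * ‖x‖ ^ 2) : ‖T‖ ≤ M := by
  rw [T.norm_eq_iSup_rayleighQuotient hT]
  refine ciSup_le fun x => ?_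
  rcases eq_or_ne x 0 with rfl | hx
  · simpa
  rw [rayleighQuotient, reApplyInnerSelf_apply, abs_div, abs_sq, div_le_iff₀ (by positivity)]
  exact h x

lemma norm_le_norm_realPart_add_norm_imaginaryPart {A : Type*} [SeminormedAddCommGroup A]
    [StarAddMonoid A] [NormedSpace ℂ A] [StarModule ℂ A] (a : A) :
    ‖a‖ ≤ ‖(ℜ a : A)‖ + ‖(ℑ a : A)‖ :=
  calc ‖a‖ = ‖(ℜ a : A) + Complex.I • (ℑ a : A)‖ := by rw [realPart_add_I_smul_imaginaryPart]
    _ ≤ ‖(ℜ a : A)‖ + ‖Complex.I • (ℑ a : A)‖ := norm_add_le _ _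
    _ = ‖(ℜ a : A)‖ + ‖(ℑ a : A)‖ := by rw [norm_smul, Complex.norm_I, one_mul]

section numRad

variable {E : Type*} [NormedAddCommGroup E] [InnerProductSpace ℂ E]

lemma numRad_nonneg (T : E →L[ℂ] E) : 0 ≤ numRad T :=
  Real.iSup_nonneg fun _ => norm_nonneg _

lemma norm_inner_self_le_numRad (T : E →L[ℂ] E) {x : E} (hx : ‖x‖ = 1) :
    ‖⟪T x, x⟫_ℂ‖ ≤ numRad T := by
  refine le_ciSup (f := fun x : {x : E // ‖x‖ = 1} => ‖⟪T x, (x : E)⟫_ℂ‖) ⟨‖T‖, ?_⟩ ⟨x, hx⟩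
  rintro _ ⟨⟨y, hy⟩, rfl⟩
  calc ‖⟪T y, y⟫_ℂ‖ ≤ ‖T y‖ * ‖y‖ := norm_inner_le_norm _ _
    _ ≤ ‖T‖ * ‖y‖ * ‖y‖ := by gcongr; exact T.le_opNorm y
    _ = ‖T‖ := by rw [hy, mul_one, mul_one]

lemma norm_inner_self_le_numRad_mul_sq (T : E →L[ℂ] E) (x : E) :
    ‖⟪T x, x⟫_ℂ‖ ≤ numRad T * ‖x‖ ^ 2 := by
  rcases eq_or_ne x 0 with rfl | hx
  · simp
  have hx' : 0 < ‖x‖ := norm_pos_iff.2 hx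
  have hunit : ‖(‖x‖⁻¹ : ℂ) • x‖ = 1 := by simp [norm_smul, hx'.ne']
  have hw := norm_inner_self_le_numRad T hunit
  rw [map_smul, inner_smul_left, inner_smul_right] at hw
  simpa [norm_mul, div_le_iff₀, hx', field, mul_comm] using hw

lemma numRad_I_smul (T : E →L[ℂ] E) : numRad (Complex.I • T) = numRad T := by
  simp [numRad]

end numRad

lemma re_inner_realPart_apply_self (T : H →L[ℂ] H) (x : H) :
    re ⟪(ℜ T : H →L[ℂ] H) x, x⟫_ℂ = re ⟪T x, x⟫_ℂ := by
  simp [realPart_apply_coe, star_eq_adjoint, adjoint_inner_left]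
  rw [← inner_conj_symm, Complex.conj_re]
  ring

lemma norm_realPart_le_numRad (T : H →L[ℂ] H) : ‖(ℜ T : H →L[ℂ] H)‖ ≤ numRad T :=
  norm_le_of_abs_re_inner_self_le (ℜ T).prop.isSymmetric (numRad_nonneg T) fun x => by
    rw [re_inner_realPart_apply_self]
    exact (abs_re_le_norm _).trans (norm_inner_self_le_numRad_mul_sq T x)

lemma norm_imaginaryPart_le_numRad (T : H →L[ℂ] H) : ‖(ℑ T : H →L[ℂ] H)‖ ≤ numRad T := by
  have h := norm_realPart_le_numRad (Complex.I • T)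
  rw [realPart_I_smul, numRad_I_smul] at h
  simpa using h

lemma reOp_eq_realPart (A : H →L[ℂ] H) : reOp A = ℜ A := by
  ext x
  simp [reOp, realPart_apply_coe, star_eq_adjoint, ← Complex.coe_smul]

lemma imOp_eq_imaginaryPart (A : H →L[ℂ] H) : imOp A = ℑ A := by
  ext x
  simp [imOp, imaginaryPart_apply_coe, star_eq_adjoint, ← Complex.coe_smul, mul_smul]

theorem numRad_lower_bound (A : H →L[ℂ] H) :
    numRad A ≥ (1 / 2) * ‖A‖ + (1 / 2) * |‖reOp A‖ - ‖imOp A‖| := by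
  have hA : ‖A‖ ≤ ‖reOp A‖ + ‖imOp A‖ := by
    simpa only [reOp_eq_realPart, imOp_eq_imaginaryPart] using
      norm_le_norm_realPart_add_norm_imaginaryPart A
  have hre : ‖reOp A‖ ≤ numRad A := reOp_eq_realPart A ▸ norm_realPart_le_numRad A
  have him : ‖imOp A‖ ≤ numRad A := imOp_eq_imaginaryPart A ▸ norm_imaginaryPart_le_numRad A
  calc (1 / 2) * ‖A‖ + (1 / 2) * |‖reOp A‖ - ‖imOp A‖|
      ≤ (1 / 2) * (‖reOp A‖ + ‖imOp A‖) + (1 / 2) * |‖reOp A‖ - ‖imOp A‖| := by gcongr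
    _ = max ‖reOp A‖ ‖imOp A‖ := by
      rw [sup_eq_half_smul_add_add_abs_sub' ℝ, abs_sub_comm, smul_eq_mul]; ring
    _ ≤ numRad A := max_le hre him
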